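/- Let H be a real Hilbert space, g : [0,∞) → H continuous, δ > 0, A self-adjoint nonnegative bounded with projection Q onto (ker A)^⊥ satisfying |Qu|² ≤ (1/ν)|A^{1/2}u|², μ = min{1/2, ν/2, δ/2, ν/(5δ)}, and let u be a C² solution of u'' + 2δu' + Au = g on an interval (a,b) with u(t) ≠ 0 for all t ∈ (a,b). For d ≥ 0 define G_d(t) = (|u'(t)|² + |A^{1/2}u(t)|²)/|u(t)|^{2+d} and Ĝ_d(t) = (|u'(t)|² + |A^{1/2}u(t)|² + 2μ⟨u'(t), Qu(t)⟩)/|u(t)|^{2+d}. Then for all t ∈ (a,b): Ĝ_d'(t) ≤ -(μ/2)Ĝ_d(t) + (2/δ)|g(t)|²/|u(t)|^{2+d} + (2+d)|u(t)|^{d/2} · G_d(t)^{1/2} · Ĝ_d(t). -/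

import Mathlib

/-!
Write `E = |u'|² + |A^{1/2}u|² + 2μ⟨u', Qu⟩` for the numerator of `Ĝ_d`. Along the equation,
`E' = 2⟨g, u'⟩ - 4δ|u'|² + 2μ|Qu'|² + 2μ⟨g, Qu⟩ - 4δμ⟨u', Qu⟩ - 2μ|A^{1/2}u|²`, since the terms
`⟨Au, u'⟩` cancel and `⟨Au, Qu⟩ = |A^{1/2}u|²` (`Q` fixes the range of `A`). Young's inequality
and `ν|Qu|² ≤ |A^{1/2}u|²` turn this into `E' ≤ -(μ/2)E + (2/δ)|g|²`, and the same two facts give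
`E ≥ 0`. Differentiating the denominator `|u|^{2+d}` produces `-(2+d)E⟨u, u'⟩/|u|^{4+d}`, which is
at most `(2+d)|u|^{d/2} G_d^{1/2} Ĝ_d` because `|⟨u, u'⟩| ≤ |u| |u'|`.
-/

open Real
open scoped RealInnerProductSpace

/-- With `x = |u'|`, `y = |A^{1/2}u|`, `q = |Qu|`, `p = |Qu'|`, `m₁ = ⟨g, u'⟩`, `m₂ = ⟨g, Qu⟩`,
`m₃ = ⟨u', Qu⟩`, this is the bound `E' ≤ -(μ/2)E + (2/δ)|g|²` on the modified energy. -/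
theorem dissipation_inequality {δ ν μ G x y q p m₁ m₂ m₃ : ℝ}
    (hδ : 0 < δ) (hμ : 0 ≤ μ) (hμδ : 2 * μ ≤ δ) (hμν : 5 * δ * μ ≤ ν)
    (hx : 0 ≤ x) (hq : 0 ≤ q) (hm₁ : m₁ ≤ G * x) (hm₂ : m₂ ≤ G * q) (hm₃ : -(x * q) ≤ m₃)
    (hp : p ^ 2 ≤ x ^ 2) (hqy : ν * q ^ 2 ≤ y ^ 2) :
    2 * m₁ - 4 * δ * x ^ 2 + 2 * μ * p ^ 2 + 2 * μ * m₂ - 4 * δ * μ * m₃ - 2 * μ * y ^ 2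
      ≤ -(μ / 2) * (x ^ 2 + y ^ 2 + 2 * μ * m₃) + (2 / δ) * G ^ 2 := by
  have h₁ : 2 * m₁ ≤ δ * x ^ 2 + δ⁻¹ * G ^ 2 := by
    linarith [two_mul_le_add_mul_sq (a := x) (b := G) hδ]
  have h₂ : 2 * μ * m₂ ≤ δ * (μ * q) ^ 2 + δ⁻¹ * G ^ 2 := by
    nlinarith [two_mul_le_add_mul_sq (a := μ * q) (b := G) hδ]
  have h₃ : (4 * δ * μ - μ ^ 2) * -m₃ ≤ δ * (x ^ 2 + (2 * μ * q) ^ 2) := by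
    have hxq : 0 ≤ x * q := mul_nonneg hx hq
    have hcoef : 0 ≤ 4 * δ * μ - μ ^ 2 := by nlinarith
    calc (4 * δ * μ - μ ^ 2) * -m₃ ≤ (4 * δ * μ - μ ^ 2) * (x * q) := by gcongr; linarith
      _ ≤ δ * (2 * x * (2 * μ * q)) := by nlinarith [mul_nonneg (sq_nonneg μ) hxq]
      _ ≤ δ * (x ^ 2 + (2 * μ * q) ^ 2) := by gcongr; exact two_mul_le_add_sq _ _
  have h₄ : 2 * μ * p ^ 2 ≤ δ * x ^ 2 := by nlinarith
  have h₅ : 5 * δ * μ ^ 2 * q ^ 2 ≤ μ * y ^ 2 := by nlinarith [mul_nonneg hμ (sq_nonneg q)]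
  have hG : (2 / δ) * G ^ 2 = 2 * (δ⁻¹ * G ^ 2) := by ring
  nlinarith [mul_le_mul_of_nonneg_right hμδ (sq_nonneg x), mul_nonneg hμ (sq_nonneg y)]

theorem rpow_half_mul_sqrt_div_rpow {r : ℝ} (hr : 0 < r) (d K : ℝ) :
    r ^ (d / 2) * √(K / r ^ (2 + d)) = √K / r := by
  have hsq : r ^ (2 + d) = (r ^ (d / 2)) ^ 2 * r ^ 2 := by
    rw [← rpow_natCast, ← rpow_mul hr.le, ← rpow_two, ← rpow_add hr]
    ring_nf
  have hpos : 0 < r ^ (d / 2) := rpow_pos_of_pos hr _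
  rw [hsq, sqrt_div' _ (by positivity), sqrt_mul (by positivity), sqrt_sq hpos.le, sqrt_sq hr.le]
  field_simp

section InnerProductSpace

variable {H : Type*} [NormedAddCommGroup H] [InnerProductSpace ℝ H]

theorem neg_inner_div_norm_sq_le {x v : H} {K : ℝ} (hK : ‖v‖ ^ 2 ≤ K) :
    -⟪x, v⟫ / ‖x‖ ^ 2 ≤ √K / ‖x‖ := by
  rcases eq_or_ne x 0 with rfl | hx
  · simp
  have hr : 0 < ‖x‖ := norm_pos_iff.2 hx
  have hvK : ‖v‖ ≤ √K := le_sqrt_of_sq_le hK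
  rw [div_le_div_iff₀ (by positivity) hr, pow_two]
  calc -⟪x, v⟫ * ‖x‖ ≤ ‖x‖ * ‖v‖ * ‖x‖ := by
        gcongr; exact (neg_le_abs _).trans (abs_real_inner_le_norm _ _)
    _ ≤ √K * (‖x‖ * ‖x‖) := by nlinarith

theorem HasDerivAt.div_norm_rpow {f : ℝ → ℝ} {f' : ℝ} {u : ℝ → H} {v : H} {t p : ℝ}
    (hf : HasDerivAt f f' t) (hu : HasDerivAt u v t) (hu₀ : u t ≠ 0) (hp : 1 < p) :
    HasDerivAt (fun s => f s / ‖u s‖ ^ p)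
      ((f' - p * f t * ⟪u t, v⟫ / ‖u t‖ ^ 2) / ‖u t‖ ^ p) t := by
  have hr : 0 < ‖u t‖ := norm_pos_iff.2 hu₀
  have hN : HasDerivAt (fun s => ‖u s‖ ^ p) (p * ‖u t‖ ^ (p - 2) * ⟪u t, v⟫) t := by
    have h := (hasFDerivAt_norm_rpow (u t) hp).comp_hasDerivAt t hu
    simp only [FunLike.coe_smul, Pi.smul_apply, innerSL_apply_apply, smul_eq_mul] at h
    exact h
  refine (hf.div hN (rpow_pos_of_pos hr p).ne').congr_deriv ?_
  rw [rpow_sub hr, rpow_two]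
  field_simp

noncomputable def modifiedEnergy (S Q : H →L[ℝ] H) (μ : ℝ) (x v : H) : ℝ :=
  ‖v‖ ^ 2 + ‖S x‖ ^ 2 + 2 * μ * ⟪v, Q x⟫

variable {S Q : H →L[ℝ] H} {μ ν : ℝ}

theorem modifiedEnergy_nonneg (hQS : ∀ x, ν * ‖Q x‖ ^ 2 ≤ ‖S x‖ ^ 2) (hμ₀ : 0 ≤ μ)
    (hμ : μ ^ 2 ≤ ν) (x v : H) : 0 ≤ modifiedEnergy S Q μ x v := by
  have hvQ : -(‖v‖ * ‖Q x‖) ≤ ⟪v, Q x⟫ := neg_le_of_abs_le (abs_real_inner_le_norm _ _)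
  have hQ : μ ^ 2 * ‖Q x‖ ^ 2 ≤ ‖S x‖ ^ 2 :=
    (mul_le_mul_of_nonneg_right hμ (sq_nonneg _)).trans (hQS x)
  unfold modifiedEnergy
  nlinarith [sq_nonneg (‖v‖ - μ * ‖Q x‖), mul_le_mul_of_nonneg_left hvQ hμ₀]

theorem HasDerivAt.modifiedEnergy {x v : ℝ → H} {x' v' : H} {t : ℝ}
    (hx : HasDerivAt x x' t) (hv : HasDerivAt v v' t) :
    HasDerivAt (fun s => modifiedEnergy S Q μ (x s) (v s))
      (2 * ⟪v t, v'⟫ + 2 * ⟪S (x t), S x'⟫ + 2 * μ * (⟪v t, Q x'⟫ + ⟪v', Q (x t)⟫)) t :=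
  (hv.norm_sq.add (S.hasFDerivAt.comp_hasDerivAt t hx).norm_sq).add
    ((hv.inner ℝ (Q.hasFDerivAt.comp_hasDerivAt t hx)).const_mul (2 * μ))

noncomputable def dirichletQuotient (S : H →L[ℝ] H) (d : ℝ) (u : ℝ → H) (t : ℝ) : ℝ :=
  (‖deriv u t‖ ^ 2 + ‖S (u t)‖ ^ 2) / ‖u t‖ ^ (2 + d)

noncomputable def modifiedDirichletQuotient (S Q : H →L[ℝ] H) (μ d : ℝ) (u : ℝ → H) (t : ℝ) : ℝ :=
  modifiedEnergy S Q μ (u t) (deriv u t) / ‖u t‖ ^ (2 + d)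

end InnerProductSpace

section Operators

variable {H : Type*} [NormedAddCommGroup H] [InnerProductSpace ℝ H] [CompleteSpace H]
  {A S Q : H →L[ℝ] H}

theorem inner_apply_apply_of_comp_self_eq (hS : IsSelfAdjoint S) (hSA : S.comp S = A) (x y : H) :
    ⟪S x, S y⟫ = ⟪A x, y⟫ := by
  rw [← hSA]
  exact (hS.isSymmetric (S x) y).symm

theorem inner_apply_self_eq_norm_sq_of_idempotent (hQ₁ : Q.comp Q = Q) (hQ₂ : IsSelfAdjoint Q)
    (x : H) : ⟪x, Q x⟫ = ‖Q x‖ ^ 2 := by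
  calc ⟪x, Q x⟫ = ⟪x, Q (Q x)⟫ := by rw [← ContinuousLinearMap.comp_apply, hQ₁]
    _ = ⟪Q x, Q x⟫ := (hQ₂.isSymmetric x (Q x)).symm
    _ = ‖Q x‖ ^ 2 := real_inner_self_eq_norm_sq _

theorem norm_apply_le_of_idempotent (hQ₁ : Q.comp Q = Q) (hQ₂ : IsSelfAdjoint Q) (x : H) :
    ‖Q x‖ ≤ ‖x‖ := by
  have h : ‖Q x‖ ^ 2 ≤ ‖x‖ * ‖Q x‖ :=
    inner_apply_self_eq_norm_sq_of_idempotent hQ₁ hQ₂ x ▸ real_inner_le_norm _ _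
  nlinarith [norm_nonneg x, norm_nonneg (Q x)]

theorem apply_apply_eq_of_range_eq_orthogonal_ker (hA : IsSelfAdjoint A) (hQ₁ : Q.comp Q = Q)
    (hQ : LinearMap.range (Q : H →ₗ[ℝ] H) = (LinearMap.ker (A : H →ₗ[ℝ] H))ᗮ) (x : H) :
    Q (A x) = A x := by
  have hmem : A x ∈ LinearMap.range (Q : H →ₗ[ℝ] H) := by
    rw [hQ, Submodule.mem_orthogonal]
    intro k hk
    calc ⟪k, A x⟫ = ⟪A k, x⟫ := (hA.isSymmetric k x).symm
      _ = 0 := by rw [show A k = 0 from hk, inner_zero_left]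
  obtain ⟨z, hz⟩ := hmem
  rw [← hz]
  exact congrArg (· z) hQ₁

theorem inner_apply_projection_eq_norm_sq (hA : IsSelfAdjoint A) (hS : IsSelfAdjoint S)
    (hSA : S.comp S = A) (hQ₁ : Q.comp Q = Q) (hQ₂ : IsSelfAdjoint Q)
    (hQ : LinearMap.range (Q : H →ₗ[ℝ] H) = (LinearMap.ker (A : H →ₗ[ℝ] H))ᗮ) (x : H) :
    ⟪A x, Q x⟫ = ‖S x‖ ^ 2 :=
  calc ⟪A x, Q x⟫ = ⟪Q (A x), x⟫ := (hQ₂.isSymmetric (A x) x).symm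
    _ = ⟪S x, S x⟫ := by
      rw [apply_apply_eq_of_range_eq_orthogonal_ker hA hQ₁ hQ,
        inner_apply_apply_of_comp_self_eq hS hSA]
    _ = ‖S x‖ ^ 2 := real_inner_self_eq_norm_sq _

variable {μ ν δ : ℝ}

theorem modifiedEnergy_deriv_le (hA : IsSelfAdjoint A) (hS : IsSelfAdjoint S)
    (hSA : S.comp S = A) (hQ₁ : Q.comp Q = Q) (hQ₂ : IsSelfAdjoint Q)
    (hQ : LinearMap.range (Q : H →ₗ[ℝ] H) = (LinearMap.ker (A : H →ₗ[ℝ] H))ᗮ)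
    (hQS : ∀ x, ν * ‖Q x‖ ^ 2 ≤ ‖S x‖ ^ 2) (hδ : 0 < δ) (hμ₀ : 0 ≤ μ) (hμδ : 2 * μ ≤ δ)
    (hμν : 5 * δ * μ ≤ ν) {x v w g : H} (hw : w + (2 * δ) • v + A x = g) :
    2 * ⟪v, w⟫ + 2 * ⟪S x, S v⟫ + 2 * μ * (⟪v, Q v⟫ + ⟪w, Q x⟫)
      ≤ -(μ / 2) * modifiedEnergy S Q μ x v + (2 / δ) * ‖g‖ ^ 2 := by
  obtain rfl : w = g - (2 * δ) • v - A x := by rw [← hw]; abel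
  have hvw : ⟪v, g - (2 * δ) • v - A x⟫ = ⟪g, v⟫ - 2 * δ * ‖v‖ ^ 2 - ⟪A x, v⟫ := by
    rw [inner_sub_right, inner_sub_right, real_inner_smul_right, real_inner_self_eq_norm_sq,
      real_inner_comm g, real_inner_comm (A x)]
  have hwQ : ⟪g - (2 * δ) • v - A x, Q x⟫ = ⟪g, Q x⟫ - 2 * δ * ⟪v, Q x⟫ - ‖S x‖ ^ 2 := by
    rw [inner_sub_left, inner_sub_left, real_inner_smul_left,
      inner_apply_projection_eq_norm_sq hA hS hSA hQ₁ hQ₂ hQ]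
  rw [hvw, hwQ, inner_apply_apply_of_comp_self_eq hS hSA,
    inner_apply_self_eq_norm_sq_of_idempotent hQ₁ hQ₂, modifiedEnergy]
  have hvQ : -(‖v‖ * ‖Q x‖) ≤ ⟪v, Q x⟫ := neg_le_of_abs_le (abs_real_inner_le_norm _ _)
  have hQv : ‖Q v‖ ^ 2 ≤ ‖v‖ ^ 2 := by
    gcongr; exact norm_apply_le_of_idempotent hQ₁ hQ₂ v
  linarith [dissipation_inequality hδ hμ₀ hμδ hμν (norm_nonneg v) (norm_nonneg (Q x))
    (real_inner_le_norm g v) (real_inner_le_norm g (Q x)) hvQ hQv (hQS x)]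

theorem deriv_modifiedDirichletQuotient_le (hA : IsSelfAdjoint A) (hS : IsSelfAdjoint S)
    (hSA : S.comp S = A) (hQ₁ : Q.comp Q = Q) (hQ₂ : IsSelfAdjoint Q)
    (hQ : LinearMap.range (Q : H →ₗ[ℝ] H) = (LinearMap.ker (A : H →ₗ[ℝ] H))ᗮ)
    (hQS : ∀ x, ν * ‖Q x‖ ^ 2 ≤ ‖S x‖ ^ 2) (hδ : 0 < δ) (hμ₀ : 0 ≤ μ) (hμδ : 2 * μ ≤ δ)
    (hμν : 5 * δ * μ ≤ ν) {d : ℝ} (hd : 0 ≤ d) {u : ℝ → H} {t : ℝ} {g : H}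
    (hu : DifferentiableAt ℝ u t) (hu' : DifferentiableAt ℝ (deriv u) t) (hu₀ : u t ≠ 0)
    (hODE : deriv (deriv u) t + (2 * δ) • deriv u t + A (u t) = g) :
    deriv (modifiedDirichletQuotient S Q μ d u) t
      ≤ -(μ / 2) * modifiedDirichletQuotient S Q μ d u t + (2 / δ) * (‖g‖ ^ 2 / ‖u t‖ ^ (2 + d))
        + (2 + d) * ‖u t‖ ^ (d / 2) * √(dirichletQuotient S d u t)
          * modifiedDirichletQuotient S Q μ d u t := by
  have hr : 0 < ‖u t‖ := norm_pos_iff.2 hu₀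
  have hquot := (hu.hasDerivAt.modifiedEnergy (S := S) (Q := Q) (μ := μ)
    hu'.hasDerivAt).div_norm_rpow hu.hasDerivAt hu₀ (by linarith : (1 : ℝ) < 2 + d)
  refine hquot.deriv.le.trans ?_
  have hE' := modifiedEnergy_deriv_le hA hS hSA hQ₁ hQ₂ hQ hQS hδ hμ₀ hμδ hμν hODE
  have hE := modifiedEnergy_nonneg hQS hμ₀ (by nlinarith) (u t) (deriv u t)
  have hcorr : -⟪u t, deriv u t⟫ / ‖u t‖ ^ 2 ≤ ‖u t‖ ^ (d / 2) * √(dirichletQuotient S d u t) := by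
    rw [dirichletQuotient, rpow_half_mul_sqrt_div_rpow hr]
    exact neg_inner_div_norm_sq_le (le_add_of_nonneg_right (sq_nonneg _))
  have hbound := add_le_add hE'
    (mul_le_mul_of_nonneg_left hcorr (mul_nonneg (by linarith : (0 : ℝ) ≤ 2 + d) hE))
  convert div_le_div_of_nonneg_right hbound (rpow_pos_of_pos hr (2 + d)).le using 1
  · ring
  · unfold modifiedDirichletQuotient
    ring

end Operators

theorem stmt10_general {H : Type*} [NormedAddCommGroup H] [InnerProductSpace ℝ H] [CompleteSpace H]
    (A S Q : H →L[ℝ] H)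
    (hA : IsSelfAdjoint A)
    (hS : IsSelfAdjoint S) (hSA : S.comp S = A)
    (hQ1 : Q.comp Q = Q) (hQ2 : IsSelfAdjoint Q)
    (hQ3 : LinearMap.range (Q : H →ₗ[ℝ] H) = (LinearMap.ker (A : H →ₗ[ℝ] H))ᗮ)
    (ν δ : ℝ) (hν : 0 < ν) (hδ : 0 < δ)
    (hQbound : ∀ u : H, ‖Q u‖^2 ≤ (1/ν) * ‖S u‖^2)
    (μ : ℝ) (hμ : μ = min (min (1/2) (ν/2)) (min (δ/2) (ν/(5*δ))))
    (g : ℝ → H)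
    (a b : ℝ) (u : ℝ → H) (hu : ContDiff ℝ 2 u)
    (hODE : ∀ t ∈ Set.Ioo a b, deriv (deriv u) t + (2*δ) • deriv u t + A (u t) = g t)
    (hne : ∀ t ∈ Set.Ioo a b, u t ≠ 0)
    (d : ℝ) (hd : 0 ≤ d) :
    ∀ t ∈ Set.Ioo a b,
      deriv (fun s =>
          (‖deriv u s‖^2 + ‖S (u s)‖^2 + 2*μ*(@inner ℝ H _ (deriv u s) (Q (u s)))) / ‖u s‖ ^ ((2:ℝ)+d)) t ≤
        -(μ/2) * ((‖deriv u t‖^2 + ‖S (u t)‖^2 + 2*μ*(@inner ℝ H _ (deriv u t) (Q (u t)))) / ‖u t‖ ^ ((2:ℝ)+d))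
        + (2/δ) * (‖g t‖^2 / ‖u t‖ ^ ((2:ℝ)+d))
        + (2+d) * ‖u t‖ ^ (d/2)
            * Real.sqrt ((‖deriv u t‖^2 + ‖S (u t)‖^2) / ‖u t‖ ^ ((2:ℝ)+d))
            * ((‖deriv u t‖^2 + ‖S (u t)‖^2 + 2*μ*(@inner ℝ H _ (deriv u t) (Q (u t)))) / ‖u t‖ ^ ((2:ℝ)+d)) := by
  intro t ht
  have hμ₀ : 0 ≤ μ := by rw [hμ]; positivity
  have hμδ : μ ≤ δ / 2 := hμ ▸ (min_le_right _ _).trans (min_le_left _ _)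
  have hμν : μ ≤ ν / (5 * δ) := hμ ▸ (min_le_right _ _).trans (min_le_right _ _)
  rw [le_div_iff₀' (by positivity)] at hμν
  have hQS : ∀ x, ν * ‖Q x‖ ^ 2 ≤ ‖S x‖ ^ 2 := fun x => by
    have h := hQbound x
    rwa [one_div, ← div_eq_inv_mul, le_div_iff₀' hν] at h
  have hu' : ContDiff ℝ 1 (deriv u) := hu.iterate_deriv' 1 1
  exact deriv_modifiedDirichletQuotient_le hA hS hSA hQ1 hQ2 hQ3 hQS hδ hμ₀ (by linarith) hμν hd
    (hu.differentiable (by norm_num) t) (hu'.differentiable one_ne_zero t) (hne t ht) (hODE t ht)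

/-- Differential inequality for the modified generalized Dirichlet quotient Ĝ_d. -/
theorem stmt10 {H : Type*} [NormedAddCommGroup H] [InnerProductSpace ℝ H] [CompleteSpace H]
    (A S Q : H →L[ℝ] H)
    (hA : IsSelfAdjoint A) (hApos : ∀ u : H, 0 ≤ (@inner ℝ H _ (A u) (u)))
    (hS : IsSelfAdjoint S) (hSpos : ∀ u : H, 0 ≤ (@inner ℝ H _ (S u) (u))) (hSA : S.comp S = A)
    (hQ1 : Q.comp Q = Q) (hQ2 : IsSelfAdjoint Q)
    (hQ3 : LinearMap.range (Q : H →ₗ[ℝ] H) = (LinearMap.ker (A : H →ₗ[ℝ] H))ᗮ)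
    (ν δ : ℝ) (hν : 0 < ν) (hδ : 0 < δ)
    (hQbound : ∀ u : H, ‖Q u‖^2 ≤ (1/ν) * ‖S u‖^2)
    (μ : ℝ) (hμ : μ = min (min (1/2) (ν/2)) (min (δ/2) (ν/(5*δ))))
    (g : ℝ → H) (hg : Continuous g)
    (a b : ℝ) (u : ℝ → H) (hu : ContDiff ℝ 2 u)
    (hODE : ∀ t ∈ Set.Ioo a b, deriv (deriv u) t + (2*δ) • deriv u t + A (u t) = g t)
    (hne : ∀ t ∈ Set.Ioo a b, u t ≠ 0)
    (d : ℝ) (hd : 0 ≤ d) :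
    ∀ t ∈ Set.Ioo a b,
      deriv (fun s =>
          (‖deriv u s‖^2 + ‖S (u s)‖^2 + 2*μ*(@inner ℝ H _ (deriv u s) (Q (u s)))) / ‖u s‖ ^ ((2:ℝ)+d)) t ≤
        -(μ/2) * ((‖deriv u t‖^2 + ‖S (u t)‖^2 + 2*μ*(@inner ℝ H _ (deriv u t) (Q (u t)))) / ‖u t‖ ^ ((2:ℝ)+d))
        + (2/δ) * (‖g t‖^2 / ‖u t‖ ^ ((2:ℝ)+d))
        + (2+d) * ‖u t‖ ^ (d/2)
            * Real.sqrt ((‖deriv u t‖^2 + ‖S (u t)‖^2) / ‖u t‖ ^ ((2:ℝ)+d))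
            * ((‖deriv u t‖^2 + ‖S (u t)‖^2 + 2*μ*(@inner ℝ H _ (deriv u t) (Q (u t)))) / ‖u t‖ ^ ((2:ℝ)+d)) :=
  stmt10_general A S Q hA hS hSA hQ1 hQ2 hQ3 ν δ hν hδ hQbound μ hμ g a b u hu hODE hne d hd
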